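/- Let D be a quaternion algebra over a number field F, 𝒪 an O_F-order of full rank in D, K a maximal subfield of D (necessarily quadratic over F), and B := K ∩ 𝒪. Let 𝔟 be a locally principal integral ideal of B. Then 𝔟 is a primitive B-ideal if and only if 𝔟𝒪 is a primitive right 𝒪-ideal. -/

import Mathlib

open Polynomial NumberField IsDedekindDomain
open scoped NumberField Quaternion Classical

noncomputable section

namespace QPaper

/-- An element of a number field is *totally positive* if it is nonzero and positive under
every real embedding. -/
def TotPos {F : Type*} [Field F] (x : F) : Prop :=
  x ≠ 0 ∧ ∀ σ : F →+* ℝ, 0 < σ x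

/-- A number field is *totally real* if all its infinite places are real. -/
def TotallyReal (F : Type*) [Field F] [NumberField F] : Prop :=
  ∀ v : InfinitePlace F, v.IsReal

variable {F : Type*} [Field F]

/-- The quaternion algebra `ℍ[F, a, b]` is *totally definite* iff it is a division (Hamilton)
algebra at every real embedding of `F`; concretely, iff `σ a < 0` and `σ b < 0` for every
real embedding `σ`. -/
def IsTotallyDefinite (a b : F) : Prop :=
  ∀ σ : F →+* ℝ, σ a < 0 ∧ σ b < 0

/-- The reduced norm of a quaternion. -/
def nrd {R : Type*} [CommRing R] {a b : R} (x : ℍ[R, a, b]) : R :=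
  x.re ^ 2 - a * x.imI ^ 2 - b * x.imJ ^ 2 + a * b * x.imK ^ 2

/-- The reduced trace of a quaternion. -/
def trd {R : Type*} [CommRing R] {a b : R} (x : ℍ[R, a, b]) : R := 2 * x.re

/-- Componentwise base change of quaternion algebras along a ring homomorphism. -/
def qmap {R S : Type*} [CommRing R] [CommRing S] (f : R →+* S) {a b : R}
    (x : ℍ[R, a, b]) : ℍ[S, f a, f b] :=
  ⟨f x.re, f x.imI, f x.imJ, f x.imK⟩

/-- Conjugate of a subset of a ring by a unit. -/
def conjSet {D : Type*} [Ring D] (x : Dˣ) (S : Set D) : Set D :=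
  (fun y => (x : D) * y * ((x⁻¹ : Dˣ) : D)) '' S

variable [NumberField F]

/-- `O ⊆ D` is an `O_F`-order of full rank: a subring containing (the image of) `O_F`,
finitely generated as a `ℤ`-module, and spanning `D` over `F`. -/
structure IsOrder {D : Type*} [Ring D] [Algebra F D] (O : Subring D) : Prop where
  scalars : ∀ c : 𝓞 F, algebraMap F D (c : F) ∈ O
  fg : ∃ s : Finset D, (O : Set D) ⊆ (Submodule.span ℤ (s : Set D) : Submodule ℤ D)
  spans : Submodule.span F (O : Set D) = ⊤

/-- The finite adele ring of a number field. -/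
abbrev FAdele (F : Type*) [Field F] [NumberField F] := FiniteAdeleRing (𝓞 F) F

/-- The subring of integral finite adeles. -/
def intAdeles (F : Type*) [Field F] [NumberField F] : Subring (FAdele F) :=
  Subring.closure {x : FAdele F | ∀ v : HeightOneSpectrum (𝓞 F),
    x v ∈ v.adicCompletionIntegers F}

variable (F) in
/-- The finite adelization `D ⊗_F 𝔸_{F,f}` of the quaternion algebra `D = ℍ[F,a,b]`. -/
abbrev Dhat (a b : F) :=
  ℍ[FAdele F, algebraMap F (FAdele F) a, algebraMap F (FAdele F) b]

variable (F) in
/-- The canonical embedding `D → D ⊗_F 𝔸_{F,f}`. -/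
def embD (a b : F) : ℍ[F, a, b] → Dhat F a b :=
  qmap (algebraMap F (FAdele F))

variable (F) in
/-- The adelic completion `𝒪̂ = 𝒪 ⊗_{O_F} Ô_F` of an order `𝒪 ⊆ D`, realized as the subring of
`D̂` generated by the image of `𝒪` and the integral adele scalars. -/
def adOrder (a b : F) (O : Subring ℍ[F, a, b]) : Subring (Dhat F a b) :=
  Subring.closure (embD F a b '' O ∪
    {z | ∃ c ∈ intAdeles F, z = algebraMap (FAdele F) (Dhat F a b) c})

variable (F) in
/-- Two orders belong to the same genus: their adelic completions are conjugate in `D̂ˣ`. -/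
def SameGenus (a b : F) (O O' : Subring ℍ[F, a, b]) : Prop :=
  ∃ x : (Dhat F a b)ˣ, conjSet x (adOrder F a b O) = adOrder F a b O'

variable (F) in
/-- Two orders are of the same type: conjugate by an element of `D^×`. -/
def SameType (a b : F) (O O' : Subring ℍ[F, a, b]) : Prop :=
  ∃ x : (ℍ[F, a, b])ˣ, conjSet x O = O'

variable (F) in
/-- Two orders belong to the same spinor genus: their adelic completions are conjugate by an
element of `D^× · D̂^1`, where `D̂¹` is the reduced norm one subgroup. -/
def SameSpinorGenus (a b : F) (O O' : Subring ℍ[F, a, b]) : Prop :=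
  ∃ x : (Dhat F a b)ˣ,
    (∃ g : ℍ[F, a, b], ∃ s : (Dhat F a b)ˣ, nrd (s : Dhat F a b) = 1 ∧
      (x : Dhat F a b) = embD F a b g * s) ∧
    conjSet x (adOrder F a b O) = adOrder F a b O'

variable (F) in
/-- The type number of an order: the number of `D^×`-conjugacy classes of orders in its genus. -/
def typeNumber (a b : F) (O : Subring ℍ[F, a, b]) : ℕ :=
  Nat.card (Quot fun (O₁ O₂ : {O' : Subring ℍ[F, a, b] // SameGenus F a b O O'}) =>
    SameType F a b O₁.1 O₂.1)

variable (F) in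
/-- The spinor type number of an order: the number of `D^×`-conjugacy classes of orders in its
spinor genus. -/
def spinorTypeNumber (a b : F) (O : Subring ℍ[F, a, b]) : ℕ :=
  Nat.card (Quot fun (O₁ O₂ : {O' : Subring ℍ[F, a, b] // SameSpinorGenus F a b O O'}) =>
    SameType F a b O₁.1 O₂.1)

variable (F) in
/-- The normalizer `N(𝒪̂) ⊆ D̂ˣ` of the adelic completion of an order. -/
def adNormalizer (a b : F) (O : Subring ℍ[F, a, b]) : Set (Dhat F a b)ˣ :=
  {x | conjSet x (adOrder F a b O) = adOrder F a b O}

variable (F) in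
/-- The image `Nr(N(𝒪̂)) ⊆ 𝔸_{F,f}^×` of the adelic normalizer under the reduced norm. -/
def nrdNormalizer (a b : F) (O : Subring ℍ[F, a, b]) : Set (FAdele F)ˣ :=
  {u | ∃ x ∈ adNormalizer F a b O, (u : FAdele F) = nrd (x : Dhat F a b)}

/-- The set of principal ideles coming from totally positive elements of `F^×`. -/
def posPrincipal (F : Type*) [Field F] [NumberField F] : Set (FAdele F)ˣ :=
  {u | ∃ c : F, TotPos c ∧ (u : FAdele F) = algebraMap F (FAdele F) c}

/-- The set of principal ideles coming from `F^×`. -/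
def principalIdeles (F : Type*) [Field F] [NumberField F] : Set (FAdele F)ˣ :=
  {u | ∃ c : F, c ≠ 0 ∧ (u : FAdele F) = algebraMap F (FAdele F) c}

variable (F) in
/-- The subgroup of `𝔸_{F,f}^×` whose quotient is the spinor genus group
`SG(𝒪) = F_+^× \ 𝔸̂^× / Nr(N(𝒪̂))`. -/
def sgSubgroup (a b : F) (O : Subring ℍ[F, a, b]) : Subgroup (FAdele F)ˣ :=
  Subgroup.closure (posPrincipal F ∪ nrdNormalizer F a b O)

variable (F) in
/-- The subgroup of `𝔸_{F,f}^×` whose quotient is the wide spinor genus group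
`WSG(𝒪) = F^× \ 𝔸̂^× / Nr(N(𝒪̂))`. -/
def wsgSubgroup (a b : F) (O : Subring ℍ[F, a, b]) : Subgroup (FAdele F)ˣ :=
  Subgroup.closure (principalIdeles F ∪ nrdNormalizer F a b O)

variable (F) in
/-- The order `|SG(𝒪)|` of the spinor genus group of `𝒪`. -/
def sgCard (a b : F) (O : Subring ℍ[F, a, b]) : ℕ := (sgSubgroup F a b O).index

variable (F) in
/-- The order `|WSG(𝒪)|` of the wide spinor genus group of `𝒪`. -/
def wsgCard (a b : F) (O : Subring ℍ[F, a, b]) : ℕ := (wsgSubgroup F a b O).index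

variable (F) in
/-- The completion `F_𝔭` of `F` at a finite place. -/
abbrev Kv (v : HeightOneSpectrum (𝓞 F)) := v.adicCompletion F

variable (F) in
/-- The completion `D_𝔭 = D ⊗_F F_𝔭` of the quaternion algebra. -/
abbrev Dv (a b : F) (v : HeightOneSpectrum (𝓞 F)) :=
  ℍ[Kv F v, algebraMap F (Kv F v) a, algebraMap F (Kv F v) b]

variable (F) in
/-- The canonical map `D → D_𝔭`. -/
def embDv (a b : F) (v : HeightOneSpectrum (𝓞 F)) : ℍ[F, a, b] → Dv F a b v :=
  qmap (algebraMap F (Kv F v))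

variable (F) in
/-- The completion `𝒪_𝔭` of an order `𝒪 ⊆ D`, realized as the subring of `D_𝔭` generated by
the image of `𝒪` and the scalars from the valuation ring of `F_𝔭`. -/
def localOrder (a b : F) (O : Subring ℍ[F, a, b]) (v : HeightOneSpectrum (𝓞 F)) :
    Subring (Dv F a b v) :=
  Subring.closure (embDv F a b v '' O ∪
    {z | ∃ c ∈ v.adicCompletionIntegers F, z = algebraMap (Kv F v) (Dv F a b v) c})

variable (F) in
/-- An order `𝒪` is *residually unramified at `𝔭`* iff its Eichler invariant at `𝔭` is nonzero,
i.e. iff the quotient of `𝒪_𝔭` by its Jacobson radical is **not** isomorphic to the residue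
field `k_𝔭`; equivalently, iff the scalars `O_{F_𝔭}` do **not** surject onto
`𝒪_𝔭 / J(𝒪_𝔭)`.  (Here `x − c ∈ J(𝒪_𝔭)` is expressed by the standard elementwise
characterisation of the Jacobson radical.) -/
def ResUnrAt (a b : F) (O : Subring ℍ[F, a, b]) (v : HeightOneSpectrum (𝓞 F)) : Prop :=
  ¬ (∀ x ∈ localOrder F a b O v, ∃ c ∈ v.adicCompletionIntegers F,
      ∀ y ∈ localOrder F a b O v, ∃ z ∈ localOrder F a b O v,
        z * (1 - y * (x - algebraMap (Kv F v) (Dv F a b v) c)) = 1 ∧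
        (1 - y * (x - algebraMap (Kv F v) (Dv F a b v) c)) * z = 1)

variable (F) in
/-- An order is *residually unramified* if it is so at every finite place. -/
def ResiduallyUnramified (a b : F) (O : Subring ℍ[F, a, b]) : Prop :=
  ∀ v : HeightOneSpectrum (𝓞 F), ResUnrAt F a b O v

variable (F) in
/-- `D` is ramified at the finite place `𝔭` iff `D_𝔭` is a division ring. -/
def RamifiedAt (a b : F) (v : HeightOneSpectrum (𝓞 F)) : Prop :=
  ∀ x : Dv F a b v, x ≠ 0 → IsUnit x

variable (F) in
/-- `D` is ramified at some finite place of `F`. -/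
def RamifiedSomewhere (a b : F) : Prop :=
  ∃ v : HeightOneSpectrum (𝓞 F), RamifiedAt F a b v

variable (F) in
/-- Ideal classes of locally principal fractional right `𝒪`-ideals, described adelically:
`Cl(𝒪) ≅ D^× \ D̂^× / 𝒪̂^×`. -/
def clRel (a b : F) (O : Subring ℍ[F, a, b]) : (Dhat F a b)ˣ → (Dhat F a b)ˣ → Prop :=
  fun x y => ∃ g : ℍ[F, a, b], ∃ u : (Dhat F a b)ˣ,
    ((u : Dhat F a b) ∈ adOrder F a b O) ∧
    (((u⁻¹ : (Dhat F a b)ˣ) : Dhat F a b) ∈ adOrder F a b O) ∧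
    (x : Dhat F a b) = embD F a b g * y * u

variable (F) in
/-- The right ideal class set `Cl(𝒪)`. -/
def ClSet (a b : F) (O : Subring ℍ[F, a, b]) := Quot (clRel F a b O)

variable (F) in
/-- The class number `h(𝒪) = |Cl(𝒪)|`. -/
def classNumberO (a b : F) (O : Subring ℍ[F, a, b]) : ℕ := Nat.card (ClSet F a b O)

variable (F) in
/-- The left order `𝒪_l(I) = D ∩ x̂ 𝒪̂ x̂⁻¹` of the right ideal attached to `x̂ ∈ D̂ˣ`. -/
def leftOrder (a b : F) (O : Subring ℍ[F, a, b]) (x : (Dhat F a b)ˣ) : Subring ℍ[F, a, b] :=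
  Subring.closure {d : ℍ[F, a, b] | embD F a b d ∈ conjSet x (adOrder F a b O)}

variable (F) in
/-- The subgroup `O_F^× ⊆ D^×` of scalar units. -/
def scalarUnitsD (a b : F) : Subgroup (ℍ[F, a, b])ˣ :=
  Subgroup.closure
    {u : (ℍ[F, a, b])ˣ | ∃ c : (𝓞 F)ˣ, (u : ℍ[F, a, b]) = algebraMap F ℍ[F, a, b] ((c : 𝓞 F) : F)}

/-- The unit group `S^×` of a subring, as a subgroup of the ambient unit group. -/
def unitsIn {D : Type*} [Ring D] (O : Subring D) : Subgroup Dˣ :=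
  Subgroup.closure {u : Dˣ | ((u : D) ∈ O) ∧ (((u⁻¹ : Dˣ) : D) ∈ O)}

variable (F) in
/-- The unit index `w(𝒪') = [𝒪'^× : O_F^×]`. -/
def unitIndexO (a b : F) (O' : Subring ℍ[F, a, b]) : ℕ :=
  (scalarUnitsD F a b).relIndex (unitsIn O')

variable (F) in
/-- The mass `Mass(𝒪) = ∑_{[I] ∈ Cl(𝒪)} 1/[𝒪_l(I)^× : O_F^×]`. -/
def massO (a b : F) (O : Subring ℍ[F, a, b]) : ℚ :=
  ∑ᶠ c : ClSet F a b O, ((unitIndexO F a b (leftOrder F a b O c.out) : ℚ))⁻¹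

variable (F) in
/-- The locally principal fractional right `𝒪`-ideal `D ∩ x̂ 𝒪̂` attached to `x̂ ∈ D̂ˣ`. -/
def rIdeal (a b : F) (O : Subring ℍ[F, a, b]) (x : (Dhat F a b)ˣ) : Set ℍ[F, a, b] :=
  {d | ∃ o ∈ adOrder F a b O, embD F a b d = (x : Dhat F a b) * o}

variable (F) in
/-- The reduced norm of a lattice: the `O_F`-submodule of `F` generated by the reduced norms
of its elements. -/
def normSub (a b : F) (I : Set ℍ[F, a, b]) : Submodule (𝓞 F) F :=
  Submodule.span (𝓞 F) ((fun d => nrd d) '' I)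

variable (F) in
/-- The diagonal entry of the Brandt matrix `𝔅(𝒪,𝔫)` at the class `c`. -/
def brandtDiag (a b : F) (O : Subring ℍ[F, a, b]) (𝔫 : Ideal (𝓞 F)) (c : ClSet F a b O) : ℕ :=
  Nat.card {J : Set ℍ[F, a, b] //
    (∃ y : (Dhat F a b)ˣ, J = rIdeal F a b O y ∧ Quot.mk (clRel F a b O) y = c) ∧
    J ⊆ rIdeal F a b O c.out ∧
    normSub F a b J = 𝔫 • normSub F a b (rIdeal F a b O c.out)}

variable (F) in
/-- The trace of the Brandt matrix `𝔅(𝒪,𝔫)`. -/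
def brandtTrace (a b : F) (O : Subring ℍ[F, a, b]) (𝔫 : Ideal (𝓞 F)) : ℕ :=
  ∑ᶠ c : ClSet F a b O, brandtDiag F a b O 𝔫 c

/-- The set of unit ideles that are integral together with their inverses. -/
def intUnitIdeles (F : Type*) [Field F] [NumberField F] : Set (FAdele F)ˣ :=
  {u | ((u : FAdele F) ∈ intAdeles F) ∧ (((u⁻¹ : (FAdele F)ˣ) : FAdele F) ∈ intAdeles F)}

/-- The narrow class number `h⁺(F) = |F_+^× \ 𝔸̂^× / Ô_F^×|`. -/
def narrowClassNumber (F : Type*) [Field F] [NumberField F] : ℕ :=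
  (Subgroup.closure (posPrincipal F ∪ intUnitIdeles F)).index

variable (F) in
/-- The reduced discriminant `𝔡(𝒪)`, as the `O_F`-module generated by the elements
`trd((xy - yx) z̄)` for `x, y, z ∈ 𝒪`. -/
def redDisc (a b : F) (O : Subring ℍ[F, a, b]) : Submodule (𝓞 F) F :=
  Submodule.span (𝓞 F)
    {c : F | ∃ x ∈ O, ∃ y ∈ O, ∃ z ∈ O, c = trd ((x * y - y * x) * star z)}

variable (F) in
/-- `𝔭 ∣ 𝔡(𝒪)`: the prime `𝔭` divides the reduced discriminant. -/
def dvdDisc (a b : F) (v : HeightOneSpectrum (𝓞 F)) (O : Subring ℍ[F, a, b]) : Prop :=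
  redDisc F a b O ≤ Submodule.span (𝓞 F) ((fun c : 𝓞 F => (c : F)) '' (v.asIdeal : Set (𝓞 F)))

variable (F) in
/-- `ω(𝒪)`: the number of distinct prime divisors of the reduced discriminant. -/
def omegaO (a b : F) (O : Subring ℍ[F, a, b]) : ℕ :=
  Nat.card {v : HeightOneSpectrum (𝓞 F) // dvdDisc F a b v O}

variable (F) in
/-- Equality in `Picent(𝒪) = F^× \ N(𝒪̂) / 𝒪̂^×`. -/
def picRel (a b : F) (O : Subring ℍ[F, a, b]) :
    {x : (Dhat F a b)ˣ // x ∈ adNormalizer F a b O} →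
    {x : (Dhat F a b)ˣ // x ∈ adNormalizer F a b O} → Prop := fun p q =>
  ∃ c : F, c ≠ 0 ∧ ∃ u : (Dhat F a b)ˣ,
    ((u : Dhat F a b) ∈ adOrder F a b O) ∧
    (((u⁻¹ : (Dhat F a b)ˣ) : Dhat F a b) ∈ adOrder F a b O) ∧
    (p.1 : Dhat F a b) = embD F a b (algebraMap F ℍ[F, a, b] c) * q.1 * u

variable (F) in
/-- The order of the central Picard group `Picent(𝒪)`. -/
def picentCard (a b : F) (O : Subring ℍ[F, a, b]) : ℕ := Nat.card (Quot (picRel F a b O))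

/-! ### Quadratic extensions, CM orders and optimal embeddings -/

/-- The quadratic polynomial `X² - t X + m`. -/
def quadPoly (R : Type*) [CommRing R] (t m : R) : R[X] := X ^ 2 - C t * X + C m

/-- The quadratic algebra `K = F[X]/(X² - t X + m)`. -/
abbrev QExt (R : Type*) [CommRing R] (t m : R) := AdjoinRoot (quadPoly R t m)

/-- The distinguished point `λ` (the root of `X² - tX + m`). -/
def qroot (R : Type*) [CommRing R] (t m : R) : QExt R t m := AdjoinRoot.root _

/-- Base change of quadratic algebras along a ring homomorphism. -/
def quadMap {R S : Type*} [CommRing R] [CommRing S] (f : R →+* S) (t m : R) :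
    QExt R t m →+* QExt S (f t) (f m) :=
  AdjoinRoot.lift ((AdjoinRoot.of (quadPoly S (f t) (f m))).comp f)
    (AdjoinRoot.root (quadPoly S (f t) (f m))) <| by
      have h := AdjoinRoot.eval₂_root (quadPoly S (f t) (f m))
      have e : (quadPoly R t m).map f = quadPoly S (f t) (f m) := by simp [quadPoly]
      rw [← Polynomial.eval₂_map, e]
      exact h

variable (F) in
/-- The set of optimal embeddings of `B` into `𝒪`: algebra embeddings `φ : K → D` with
`φ(K) ∩ 𝒪 = φ(B)`. -/
def OptEmbs (a b t m : F) (B : Subring (QExt F t m)) (O : Subring ℍ[F, a, b]) :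
    Set (QExt F t m →ₐ[F] ℍ[F, a, b]) :=
  {φ | ∀ z : QExt F t m, φ z ∈ O ↔ z ∈ B}

/-- The normalizer of a subring, as a subset of the ambient ring. -/
def normIn {D : Type*} [Ring D] (O : Subring D) : Set D :=
  {d | ∃ x : Dˣ, (x : D) = d ∧ conjSet x O = O}

variable (F) in
/-- The set of restricted optimal embeddings of the pointed order `(B, λ)` into `𝒪`:
optimal embeddings with `φ(λ) ∈ N(𝒪)`. -/
def ROptEmbs (a b t m : F) (B : Subring (QExt F t m)) (O : Subring ℍ[F, a, b]) :
    Set (QExt F t m →ₐ[F] ℍ[F, a, b]) :=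
  {φ | φ ∈ OptEmbs F a b t m B O ∧ φ (qroot F t m) ∈ normIn O}

variable (F) in
/-- `n((B,λ),𝒪,𝒪^×)`: the number of `𝒪^×`-conjugacy classes of restricted optimal
embeddings. -/
def nGlobal (a b t m : F) (B : Subring (QExt F t m)) (O : Subring ℍ[F, a, b]) : ℕ :=
  Nat.card (Quot fun (φ ψ : {φ // φ ∈ ROptEmbs F a b t m B O}) =>
    ∃ u : (ℍ[F, a, b])ˣ, ((u : ℍ[F, a, b]) ∈ O) ∧ (((u⁻¹ : (ℍ[F, a, b])ˣ) : ℍ[F, a, b]) ∈ O) ∧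
      ∀ z, ψ.1 z = ((u⁻¹ : (ℍ[F, a, b])ˣ) : ℍ[F, a, b]) * φ.1 z * u)

variable (F) in
/-- `m(B,𝒪,𝒪^×)`: the number of `𝒪^×`-conjugacy classes of optimal embeddings. -/
def mGlobal (a b t m : F) (B : Subring (QExt F t m)) (O : Subring ℍ[F, a, b]) : ℕ :=
  Nat.card (Quot fun (φ ψ : {φ // φ ∈ OptEmbs F a b t m B O}) =>
    ∃ u : (ℍ[F, a, b])ˣ, ((u : ℍ[F, a, b]) ∈ O) ∧ (((u⁻¹ : (ℍ[F, a, b])ˣ) : ℍ[F, a, b]) ∈ O) ∧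
      ∀ z, ψ.1 z = ((u⁻¹ : (ℍ[F, a, b])ˣ) : ℍ[F, a, b]) * φ.1 z * u)

variable (F) in
/-- The local completion `B_𝔭` of an order `B ⊆ K`. -/
def BvOrd (t m : F) (B : Subring (QExt F t m)) (v : HeightOneSpectrum (𝓞 F)) :
    Subring (QExt (Kv F v) (algebraMap F (Kv F v) t) (algebraMap F (Kv F v) m)) :=
  Subring.closure ((quadMap (algebraMap F (Kv F v)) t m) '' B ∪
    {z | ∃ c ∈ v.adicCompletionIntegers F,
      z = algebraMap (Kv F v)
        (QExt (Kv F v) (algebraMap F (Kv F v) t) (algebraMap F (Kv F v) m)) c})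

variable (F) in
/-- The local restricted optimal embeddings of `(B_𝔭, λ)` into `𝒪_𝔭`. -/
def ROptEmbsLoc (a b t m : F) (B : Subring (QExt F t m)) (O : Subring ℍ[F, a, b])
    (v : HeightOneSpectrum (𝓞 F)) :
    Set (QExt (Kv F v) (algebraMap F (Kv F v) t) (algebraMap F (Kv F v) m)
      →ₐ[Kv F v] Dv F a b v) :=
  {φ | (∀ z, φ z ∈ localOrder F a b O v ↔ z ∈ BvOrd F t m B v) ∧
    φ (qroot (Kv F v) (algebraMap F (Kv F v) t) (algebraMap F (Kv F v) m))
      ∈ normIn (localOrder F a b O v)}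

variable (F) in
/-- The local optimal embeddings of `B_𝔭` into `𝒪_𝔭`. -/
def OptEmbsLoc (a b t m : F) (B : Subring (QExt F t m)) (O : Subring ℍ[F, a, b])
    (v : HeightOneSpectrum (𝓞 F)) :
    Set (QExt (Kv F v) (algebraMap F (Kv F v) t) (algebraMap F (Kv F v) m)
      →ₐ[Kv F v] Dv F a b v) :=
  {φ | ∀ z, φ z ∈ localOrder F a b O v ↔ z ∈ BvOrd F t m B v}

variable (F) in
/-- `n_𝔭(B,λ) = n((B_𝔭,λ), 𝒪_𝔭, 𝒪_𝔭^×)`. -/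
def nLocal (a b t m : F) (B : Subring (QExt F t m)) (O : Subring ℍ[F, a, b])
    (v : HeightOneSpectrum (𝓞 F)) : ℕ :=
  Nat.card (Quot fun (φ ψ : {φ // φ ∈ ROptEmbsLoc F a b t m B O v}) =>
    ∃ u : (Dv F a b v)ˣ, ((u : Dv F a b v) ∈ localOrder F a b O v) ∧
      (((u⁻¹ : (Dv F a b v)ˣ) : Dv F a b v) ∈ localOrder F a b O v) ∧
      ∀ z, ψ.1 z = ((u⁻¹ : (Dv F a b v)ˣ) : Dv F a b v) * φ.1 z * u)

variable (F) in
/-- `m_𝔭(B) = m(B_𝔭, 𝒪_𝔭, 𝒪_𝔭^×)`. -/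
def mLocal (a b t m : F) (B : Subring (QExt F t m)) (O : Subring ℍ[F, a, b])
    (v : HeightOneSpectrum (𝓞 F)) : ℕ :=
  Nat.card (Quot fun (φ ψ : {φ // φ ∈ OptEmbsLoc F a b t m B O v}) =>
    ∃ u : (Dv F a b v)ˣ, ((u : Dv F a b v) ∈ localOrder F a b O v) ∧
      (((u⁻¹ : (Dv F a b v)ˣ) : Dv F a b v) ∈ localOrder F a b O v) ∧
      ∀ z, ψ.1 z = ((u⁻¹ : (Dv F a b v)ˣ) : Dv F a b v) * φ.1 z * u)

variable (F) in
/-- The adelization `K̂ = K ⊗_F 𝔸_{F,f}` of the quadratic algebra `K`. -/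
abbrev Khat (t m : F) :=
  QExt (FAdele F) (algebraMap F (FAdele F) t) (algebraMap F (FAdele F) m)

variable (F) in
/-- The canonical embedding `K → K̂`. -/
def embK (t m : F) : QExt F t m →+* Khat F t m := quadMap (algebraMap F (FAdele F)) t m

variable (F) in
/-- The adelic completion `B̂` of an order `B ⊆ K`. -/
def adOrderK (t m : F) (B : Subring (QExt F t m)) : Subring (Khat F t m) :=
  Subring.closure (embK F t m '' B ∪
    {z | ∃ c ∈ intAdeles F, z = algebraMap (FAdele F) (Khat F t m) c})

variable (F) in
/-- The class number `h(B) = |Pic(B)| = |K^× \ K̂^× / B̂^×|`. -/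
def hB (t m : F) (B : Subring (QExt F t m)) : ℕ :=
  Nat.card (Quot fun (x y : (Khat F t m)ˣ) =>
    ∃ g : QExt F t m, ∃ u : (Khat F t m)ˣ,
      ((u : Khat F t m) ∈ adOrderK F t m B) ∧
      (((u⁻¹ : (Khat F t m)ˣ) : Khat F t m) ∈ adOrderK F t m B) ∧
      (x : Khat F t m) = embK F t m g * y * u)

variable (F) in
/-- The subgroup `O_F^× ⊆ K^×` of scalar units. -/
def scalarUnitsK (t m : F) : Subgroup (QExt F t m)ˣ :=
  Subgroup.closure
    {u : (QExt F t m)ˣ | ∃ c : (𝓞 F)ˣ,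
      (u : QExt F t m) = algebraMap F (QExt F t m) ((c : 𝓞 F) : F)}

variable (F) in
/-- The unit index `w(B) = [B^× : O_F^×]`. -/
def wB (t m : F) (B : Subring (QExt F t m)) : ℕ :=
  (scalarUnitsK F t m).relIndex (unitsIn B)

variable (F) in
/-- Scaling of a subset of an `F`-algebra by an integral ideal `𝔞 ⊆ O_F`:
the additive monoid of finite sums `∑ cᵢ xᵢ` with `cᵢ ∈ 𝔞` and `xᵢ ∈ S`. -/
def iScale {A : Type*} [Ring A] [Algebra F A] (𝔞 : Ideal (𝓞 F)) (S : Set A) : Set A :=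
  {z | z ∈ AddSubmonoid.closure
    {w : A | ∃ c ∈ 𝔞, ∃ x ∈ S, w = algebraMap F A ((c : 𝓞 F) : F) * x}}

variable (F) in
/-- `P` is a primitive two-sided `𝒪`-ideal: an invertible (locally principal) two-sided
integral ideal not contained in `𝔭𝒪` for any prime `𝔭`. -/
def IsPrimTwoSided (a b : F) (O : Subring ℍ[F, a, b]) (P : Set ℍ[F, a, b]) : Prop :=
  (∃ x : (Dhat F a b)ˣ, x ∈ adNormalizer F a b O ∧ P = rIdeal F a b O x) ∧
  P ⊆ (O : Set ℍ[F, a, b]) ∧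
  ∀ v : HeightOneSpectrum (𝓞 F), ¬ (P ⊆ iScale F v.asIdeal (O : Set ℍ[F, a, b]))

variable (F) in
/-- `ν(𝒪)`: the set of reduced norms of primitive two-sided `𝒪`-ideals. -/
def nuSet (a b : F) (O : Subring ℍ[F, a, b]) : Set (Submodule (𝓞 F) F) :=
  {N | ∃ P : Set ℍ[F, a, b], IsPrimTwoSided F a b O P ∧ N = normSub F a b P}

/-- Two nonzero ideals of `O_F` belong to the same ideal class. -/
def SameIdealClass {F : Type*} [Field F] [NumberField F] (I J : Ideal (𝓞 F)) : Prop :=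
  ∃ x y : 𝓞 F, x ≠ 0 ∧ y ≠ 0 ∧ Ideal.span {x} * I = Ideal.span {y} * J

/-- `S` is a complete set of integral ideal representatives of `Cl(O_F)`, with `O_F ∈ S`. -/
def IsClassReps (F : Type*) [Field F] [NumberField F] (S : Set (Ideal (𝓞 F))) : Prop :=
  (⊤ : Ideal (𝓞 F)) ∈ S ∧ (∀ I ∈ S, I ≠ ⊥) ∧
    ∀ J : Ideal (𝓞 F), J ≠ ⊥ → ∃! I, I ∈ S ∧ SameIdealClass I J

/-- `U` is a complete set of representatives of `O_{F,+}^× / (O_F^×)²`. -/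
def IsUnitReps (F : Type*) [Field F] [NumberField F] (U : Set (𝓞 F)ˣ) : Prop :=
  (∀ u ∈ U, TotPos (((u : 𝓞 F) : F))) ∧
  ∀ w : (𝓞 F)ˣ, TotPos (((w : 𝓞 F) : F)) → ∃! u, u ∈ U ∧ ∃ z : (𝓞 F)ˣ, w = u * z * z

variable (F) in
/-- `β` is a choice of totally positive generators `β_{(𝔞,℘)}` of `𝔞²℘` for the pairs
`(𝔞,℘) ∈ ℐ × ν(𝒪)` for which such a generator exists. -/
def IsGenChoice (a b : F) (O : Subring ℍ[F, a, b]) (S : Set (Ideal (𝓞 F)))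
    (β : Ideal (𝓞 F) → Submodule (𝓞 F) F → F) : Prop :=
  ∀ 𝔞 ∈ S, ∀ ℘ ∈ nuSet F a b O,
    (∃ γ : F, TotPos γ ∧ (𝔞 * 𝔞) • ℘ = Submodule.span (𝓞 F) {γ}) →
    TotPos (β 𝔞 ℘) ∧ (𝔞 * 𝔞) • ℘ = Submodule.span (𝓞 F) {β 𝔞 ℘}

variable (F) in
/-- A pointed CM `O_F`-order `(B, λ)`: the trace `t` and norm `m` of `λ` together with an
order `B` in `K = F[X]/(X² - tX + m)`; the distinguished point is `λ = qroot F t m`. -/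
def PtOrd := Σ t : F, Σ m : F, Subring (QExt F t m)

variable (F) in
/-- The finite set `𝓑` of pointed CM `O_F`-orders attached to the order `𝒪` and the fixed
representative data `(ℐ, 𝒰, β)`. -/
def BFamily (a b : F) (O : Subring ℍ[F, a, b]) (S : Set (Ideal (𝓞 F))) (U : Set (𝓞 F)ˣ)
    (β : Ideal (𝓞 F) → Submodule (𝓞 F) F → F) : Set (PtOrd F) :=
  {p | ∃ 𝔞 ∈ S, ∃ ℘ ∈ nuSet F a b O, ∃ ε ∈ U,
    (∃ t₀ ∈ 𝔞, ((t₀ : 𝓞 F) : F) = p.1) ∧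
    p.2.1 = ((ε : 𝓞 F) : F) * β 𝔞 ℘ ∧
    (∀ σ : F →+* ℝ, σ (p.1 ^ 2 - 4 * p.2.1) < 0) ∧
    IsOrder (F := F) p.2.2 ∧
    qroot F p.1 p.2.1 ∈ iScale F 𝔞 (p.2.2 : Set (QExt F p.1 p.2.1)) ∧
    (∀ z ∈ p.2.2, qroot F p.1 p.2.1 * z ∈ iScale F 𝔞 (p.2.2 : Set (QExt F p.1 p.2.1))) ∧
    ∀ v : HeightOneSpectrum (𝓞 F),
      ¬ (∀ z ∈ p.2.2, qroot F p.1 p.2.1 * z ∈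
          iScale F (v.asIdeal * 𝔞) (p.2.2 : Set (QExt F p.1 p.2.1)))}

variable (F) in
/-- The optimal spinor selectivity symbol `Δ(B,𝒪)`: `1` if some order in the spinor genus of
`𝒪` admits an optimal embedding of `B`, and `0` otherwise. -/
def DeltaEmb (a b t m : F) (B : Subring (QExt F t m)) (O : Subring ℍ[F, a, b]) : ℕ :=
  if ∃ O' : Subring ℍ[F, a, b], SameSpinorGenus F a b O O' ∧ (OptEmbs F a b t m B O').Nonempty
  then 1 else 0

variable (F) in
/-- The restricted selectivity symbol `Δ^res((B,λ),𝒪)`. -/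
def DeltaREmb (a b t m : F) (B : Subring (QExt F t m)) (O : Subring ℍ[F, a, b]) : ℕ :=
  if ∃ O' : Subring ℍ[F, a, b], SameSpinorGenus F a b O O' ∧ (ROptEmbs F a b t m B O').Nonempty
  then 1 else 0

variable (F) in
/-- `F_K^×`: elements of `F^×` positive at every infinite place of `F` ramified in `K/F`. -/
def FKset (t m : F) : Set F :=
  {c | c ≠ 0 ∧ ∀ σ : F →+* ℝ, σ (t ^ 2 - 4 * m) < 0 → 0 < σ c}

variable (F) in
/-- `F_D^×`: elements of `F^×` positive at every infinite place of `F` ramified in `D`. -/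
def FDset (a b : F) : Set F :=
  {c | c ≠ 0 ∧ ∀ σ : F →+* ℝ, (σ a < 0 ∧ σ b < 0) → 0 < σ c}

variable (F) in
/-- The norm subgroup `F_K^× · Nm(K̂^×) ⊆ 𝔸̂^×` corresponding to `K` by class field theory. -/
def HKsub (t m : F) : Subgroup (FAdele F)ˣ :=
  Subgroup.closure
    ({u | ∃ c ∈ FKset F t m, (u : FAdele F) = algebraMap F (FAdele F) c} ∪
     {u | ∃ w : (Khat F t m)ˣ, (u : FAdele F) = Algebra.norm (FAdele F) (w : Khat F t m)})

variable (F) in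
/-- The subgroup `F_D^× · Nr(N(𝒪̂)) ⊆ 𝔸̂^×` corresponding to the spinor genus field `Σ` by
class field theory. -/
def HSigma (a b : F) (O : Subring ℍ[F, a, b]) : Subgroup (FAdele F)ˣ :=
  Subgroup.closure
    ({u | ∃ c ∈ FDset F a b, (u : FAdele F) = algebraMap F (FAdele F) c} ∪
     nrdNormalizer F a b O)

variable (F) in
/-- The selectivity symbol `s(B,𝒪)`: `1` if `K ⊆ Σ` (expressed via class field theory as the
containment of the corresponding norm subgroups), else `0`. -/
def sSymb (a b t m : F) (O : Subring ℍ[F, a, b]) : ℕ :=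
  if HSigma F a b O ≤ HKsub F t m then 1 else 0

variable (F) in
/-- The restricted class number `h_D(F) = |F_D^× \ 𝔸̂^× / Ô_F^×|`. -/
def hDF (a b : F) : ℕ :=
  (Subgroup.closure
    (({u | ∃ c ∈ FDset F a b, (u : FAdele F) = algebraMap F (FAdele F) c} ∪
     intUnitIdeles F : Set (FAdele F)ˣ))).index

variable (F) in
/-- Two ideles give right ideals in the same spinor class: they differ by `D^× · D̂¹`. -/
def SameSpinorClass (a b : F) (x y : (Dhat F a b)ˣ) : Prop :=
  ∃ g : ℍ[F, a, b], ∃ s : (Dhat F a b)ˣ, nrd (s : Dhat F a b) = 1 ∧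
    (x : Dhat F a b) = embD F a b g * s * y


variable (F) in
/-- The completion of a lattice `S ⊆ D` at a finite place, inside `D_𝔭`. -/
def locSetD (a b : F) (v : HeightOneSpectrum (𝓞 F)) (S : Set ℍ[F, a, b]) :
    Set (Dv F a b v) :=
  {z | z ∈ AddSubmonoid.closure
    {w : Dv F a b v | ∃ c : Kv F v, c ∈ v.adicCompletionIntegers F ∧ ∃ x ∈ S,
      w = algebraMap (Kv F v) (Dv F a b v) c * embDv F a b v x}}

variable (F) in
/-- `K` is a maximal subfield of `D = ℍ[F,a,b]`: a commutative subring containing `F`, closed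
under inverses, and maximal with these properties (hence quadratic over `F`). -/
def IsMaxSubfield (a b : F) (K : Subring ℍ[F, a, b]) : Prop :=
  ((∀ c : F, algebraMap F ℍ[F, a, b] c ∈ K) ∧
    (∀ x ∈ K, ∀ y ∈ K, x * y = y * x) ∧
    (∀ x ∈ K, x ≠ 0 → ∃ y ∈ K, x * y = 1 ∧ y * x = 1)) ∧
  ∀ K' : Subring ℍ[F, a, b],
    ((∀ c : F, algebraMap F ℍ[F, a, b] c ∈ K') ∧
      (∀ x ∈ K', ∀ y ∈ K', x * y = y * x) ∧
      (∀ x ∈ K', x ≠ 0 → ∃ y ∈ K', x * y = 1 ∧ y * x = 1)) → K ≤ K' → K' = K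

variable (F) in
/-- The product of two lattices (subsets) of `D`: finite sums of products. -/
def setMulD (a b : F) (A B : Set ℍ[F, a, b]) : Set ℍ[F, a, b] :=
  {z | z ∈ AddSubmonoid.closure {w : ℍ[F, a, b] | ∃ x ∈ A, ∃ y ∈ B, w = x * y}}

variable (F) in
/-- `𝔟` is an integral ideal of the commutative order `B = K ⊓ 𝒪`. -/
def IsIntegralBIdeal (a b : F) (K O : Subring ℍ[F, a, b]) (𝔟 : Set ℍ[F, a, b]) : Prop :=
  𝔟 ⊆ ((K ⊓ O : Subring ℍ[F, a, b]) : Set ℍ[F, a, b]) ∧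
  (0 : ℍ[F, a, b]) ∈ 𝔟 ∧ (∀ x ∈ 𝔟, ∀ y ∈ 𝔟, x + y ∈ 𝔟) ∧ (∀ x ∈ 𝔟, -x ∈ 𝔟) ∧
  (∀ x ∈ 𝔟, ∀ c ∈ (K ⊓ O : Subring ℍ[F, a, b]), x * c ∈ 𝔟)

variable (F) in
/-- `𝔟` is locally principal as a `B = K ⊓ 𝒪`-ideal (with local generator in `K_𝔭^×`). -/
def IsLocPrincipalBIdeal (a b : F) (K O : Subring ℍ[F, a, b]) (𝔟 : Set ℍ[F, a, b]) : Prop :=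
  ∀ v : HeightOneSpectrum (𝓞 F), ∃ u : (Dv F a b v)ˣ,
    (u : Dv F a b v) ∈ Subring.closure (embDv F a b v '' (K : Set ℍ[F, a, b]) ∪
      {z | ∃ c : Kv F v, z = algebraMap (Kv F v) (Dv F a b v) c}) ∧
    locSetD F a b v 𝔟 =
      (fun w => (u : Dv F a b v) * w) ''
        locSetD F a b v ((K ⊓ O : Subring ℍ[F, a, b]) : Set ℍ[F, a, b])

variable (F) in
/-- `𝔟` is a primitive `B`-ideal: integral, locally principal, and not contained in `𝔭B`
for any prime `𝔭`. -/
def IsPrimitiveBIdeal (a b : F) (K O : Subring ℍ[F, a, b]) (𝔟 : Set ℍ[F, a, b]) : Prop :=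
  IsIntegralBIdeal F a b K O 𝔟 ∧ IsLocPrincipalBIdeal F a b K O 𝔟 ∧
  ∀ v : HeightOneSpectrum (𝓞 F),
    ¬ (𝔟 ⊆ iScale F v.asIdeal ((K ⊓ O : Subring ℍ[F, a, b]) : Set ℍ[F, a, b]))

variable (F) in
/-- `J` is a primitive right `𝒪`-ideal: integral, locally principal, and not contained in
`𝔭𝒪` for any prime `𝔭`. -/
def IsPrimitiveRightOIdeal (a b : F) (O : Subring ℍ[F, a, b]) (J : Set ℍ[F, a, b]) : Prop :=
  J ⊆ (O : Set ℍ[F, a, b]) ∧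
  (∀ v : HeightOneSpectrum (𝓞 F), ∃ u : (Dv F a b v)ˣ,
    locSetD F a b v J = (fun w => (u : Dv F a b v) * w) '' locSetD F a b v (O : Set ℍ[F, a, b])) ∧
  ∀ v : HeightOneSpectrum (𝓞 F), ¬ (J ⊆ iScale F v.asIdeal (O : Set ℍ[F, a, b]))

/-! ### Auxiliary lemmas for `primitive_ideal_transfer` -/

section PrimAux

set_option maxHeartbeats 1000000
set_option synthInstance.maxHeartbeats 400000
set_option linter.unusedSectionVars false

lemma qmap_add' {R S : Type*} [CommRing R] [CommRing S] (f : R →+* S) {a b : R}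
    (x y : ℍ[R, a, b]) : qmap f (x + y) = qmap f x + qmap f y := by
  ext <;> simp [qmap]

lemma qmap_mul' {R S : Type*} [CommRing R] [CommRing S] (f : R →+* S) {a b : R}
    (x y : ℍ[R, a, b]) : qmap f (x * y) = qmap f x * qmap f y := by
  ext <;> simp [qmap]

lemma qmap_one' {R S : Type*} [CommRing R] [CommRing S] (f : R →+* S) {a b : R} :
    qmap f (1 : ℍ[R, a, b]) = 1 := by
  ext <;> simp [qmap]

lemma qmap_zero' {R S : Type*} [CommRing R] [CommRing S] (f : R →+* S) {a b : R} :
    qmap f (0 : ℍ[R, a, b]) = 0 := by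
  ext <;> simp [qmap]

variable {F : Type*} [Field F] [NumberField F] {a b : F}

lemma embDv_mul' (v : HeightOneSpectrum (𝓞 F)) (x y : ℍ[F, a, b]) :
    embDv F a b v (x * y) = embDv F a b v x * embDv F a b v y := qmap_mul' _ x y

lemma embDv_add' (v : HeightOneSpectrum (𝓞 F)) (x y : ℍ[F, a, b]) :
    embDv F a b v (x + y) = embDv F a b v x + embDv F a b v y := qmap_add' _ x y

lemma embDv_one' (v : HeightOneSpectrum (𝓞 F)) :
    embDv F a b v (1 : ℍ[F, a, b]) = 1 := qmap_one' _

lemma embDv_zero' (v : HeightOneSpectrum (𝓞 F)) :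
    embDv F a b v (0 : ℍ[F, a, b]) = 0 := qmap_zero' _

lemma exists_uniformizer_pair (v : HeightOneSpectrum (𝓞 F)) :
    ∃ (π p q : 𝓞 F), π ≠ 0 ∧ π ∈ v.asIdeal ∧ p ∈ v.asIdeal ∧ p + q = 1 ∧
      ∀ c ∈ v.asIdeal, ∃ d : 𝓞 F, q * c = π * d := by
  have h2 : v.asIdeal ^ 2 < v.asIdeal :=
    Ideal.pow_lt_self v.asIdeal v.ne_bot v.isMaximal.ne_top 2 le_rfl
  obtain ⟨π, hπ, hπ2⟩ := SetLike.exists_of_lt h2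
  have hπ0 : π ≠ 0 := fun h => hπ2 (h ▸ zero_mem _)
  have hdvd : v.asIdeal ∣ Ideal.span {π} :=
    Ideal.dvd_iff_le.mpr ((Ideal.span_singleton_le_iff_mem _).mpr hπ)
  obtain ⟨Q, hQ⟩ := hdvd
  have hQp : ¬ Q ≤ v.asIdeal := by
    intro hle
    obtain ⟨R, hR⟩ := Ideal.dvd_iff_le.mpr hle
    apply hπ2
    have hle2 : Ideal.span {π} ≤ v.asIdeal ^ 2 := by
      rw [hQ, hR, ← mul_assoc, ← sq]
      exact Ideal.mul_le_left
    exact hle2 (Ideal.mem_span_singleton_self π)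
  obtain ⟨q₀, hq₀Q, hq₀p⟩ := SetLike.not_le_iff_exists.mp hQp
  have hsup : v.asIdeal ⊔ Ideal.span {q₀} = ⊤ := by
    by_contra hne
    have heq := v.isMaximal.eq_of_le hne le_sup_left
    have hmem : q₀ ∈ v.asIdeal ⊔ Ideal.span {q₀} :=
      Submodule.mem_sup_right (Ideal.mem_span_singleton_self q₀)
    rw [← heq] at hmem
    exact hq₀p hmem
  have h1 : (1 : 𝓞 F) ∈ v.asIdeal ⊔ Ideal.span {q₀} := hsup ▸ Submodule.mem_top
  obtain ⟨p, hp, t, ht, hpt⟩ := Submodule.mem_sup.mp h1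
  obtain ⟨r, hr⟩ := Ideal.mem_span_singleton'.mp ht
  have htQ : t ∈ Q := by rw [← hr]; exact Ideal.mul_mem_left Q r hq₀Q
  refine ⟨π, p, t, hπ0, hπ, hp, hpt, ?_⟩
  intro c hc
  have hmem : t * c ∈ Ideal.span {π} := by
    rw [hQ, mul_comm t c]
    exact Ideal.mul_mem_mul hc htQ
  exact Ideal.mem_span_singleton.mp hmem

/-! #### `iScale` membership lemmas -/

lemma mem_iScale_gen {A : Type*} [Ring A] [Algebra F A] {𝔞 : Ideal (𝓞 F)} {S : Set A}
    {c : 𝓞 F} (hc : c ∈ 𝔞) {x : A} (hx : x ∈ S) :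
    algebraMap F A ((c : 𝓞 F) : F) * x ∈ iScale F 𝔞 S :=
  AddSubmonoid.subset_closure ⟨c, hc, x, hx, rfl⟩

lemma mem_iScale_iff {A : Type*} [Ring A] [Algebra F A] {𝔞 : Ideal (𝓞 F)} {S : Set A}
    {z : A} : z ∈ iScale F 𝔞 S ↔
      z ∈ AddSubmonoid.closure
        {w : A | ∃ c ∈ 𝔞, ∃ x ∈ S, w = algebraMap F A ((c : 𝓞 F) : F) * x} :=
  Iff.rfl

lemma zero_mem_iScale {A : Type*} [Ring A] [Algebra F A] {𝔞 : Ideal (𝓞 F)} {S : Set A} :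
    (0 : A) ∈ iScale F 𝔞 S :=
  mem_iScale_iff.mpr (AddSubmonoid.zero_mem _)

lemma add_mem_iScale {A : Type*} [Ring A] [Algebra F A] {𝔞 : Ideal (𝓞 F)} {S : Set A}
    {x y : A} (hx : x ∈ iScale F 𝔞 S) (hy : y ∈ iScale F 𝔞 S) :
    x + y ∈ iScale F 𝔞 S :=
  mem_iScale_iff.mpr (AddSubmonoid.add_mem _ (mem_iScale_iff.mp hx) (mem_iScale_iff.mp hy))

/-! #### `locSetD` membership lemmas -/

lemma mem_locSetD_gen {v : HeightOneSpectrum (𝓞 F)} {S : Set ℍ[F, a, b]}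
    {c : Kv F v} (hc : c ∈ v.adicCompletionIntegers F) {x : ℍ[F, a, b]} (hx : x ∈ S) :
    algebraMap (Kv F v) (Dv F a b v) c * embDv F a b v x ∈ locSetD F a b v S :=
  AddSubmonoid.subset_closure ⟨c, hc, x, hx, rfl⟩

lemma embDv_mem_locSetD {v : HeightOneSpectrum (𝓞 F)} {S : Set ℍ[F, a, b]}
    {x : ℍ[F, a, b]} (hx : x ∈ S) :
    embDv F a b v x ∈ locSetD F a b v S := by
  have h := mem_locSetD_gen (a := a) (b := b) (v := v)
    (one_mem (v.adicCompletionIntegers F)) hx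
  rwa [map_one, one_mul] at h

lemma mem_locSetD_iff {v : HeightOneSpectrum (𝓞 F)} {S : Set ℍ[F, a, b]}
    {z : Dv F a b v} : z ∈ locSetD F a b v S ↔
      z ∈ AddSubmonoid.closure
        {w : Dv F a b v | ∃ c : Kv F v, c ∈ v.adicCompletionIntegers F ∧ ∃ x ∈ S,
          w = algebraMap (Kv F v) (Dv F a b v) c * embDv F a b v x} :=
  Iff.rfl

lemma zero_mem_locSetD {v : HeightOneSpectrum (𝓞 F)} {S : Set ℍ[F, a, b]} :
    (0 : Dv F a b v) ∈ locSetD F a b v S :=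
  mem_locSetD_iff.mpr (AddSubmonoid.zero_mem _)

lemma add_mem_locSetD {v : HeightOneSpectrum (𝓞 F)} {S : Set ℍ[F, a, b]}
    {x y : Dv F a b v} (hx : x ∈ locSetD F a b v S) (hy : y ∈ locSetD F a b v S) :
    x + y ∈ locSetD F a b v S :=
  mem_locSetD_iff.mpr
    (AddSubmonoid.add_mem _ (mem_locSetD_iff.mp hx) (mem_locSetD_iff.mp hy))

lemma locSetD_mono {v : HeightOneSpectrum (𝓞 F)} {S T : Set ℍ[F, a, b]} (h : S ⊆ T) :
    locSetD F a b v S ⊆ locSetD F a b v T := by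
  intro z hz
  rw [mem_locSetD_iff] at hz ⊢
  refine AddSubmonoid.closure_mono ?_ hz
  rintro w ⟨c, hc, x, hx, e⟩
  exact ⟨c, hc, x, h hx, e⟩

lemma smul_mem_locSetD {v : HeightOneSpectrum (𝓞 F)} {S : Set ℍ[F, a, b]}
    {c : Kv F v} (hc : c ∈ v.adicCompletionIntegers F) {w : Dv F a b v}
    (hw : w ∈ locSetD F a b v S) :
    algebraMap (Kv F v) (Dv F a b v) c * w ∈ locSetD F a b v S := by
  refine AddSubmonoid.closure_induction ?_ ?_ ?_ hw
  · rintro w ⟨c', hc', x, hx, rfl⟩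
    rw [← mul_assoc, ← map_mul]
    exact mem_locSetD_gen (mul_mem hc hc') hx
  · rw [mul_zero]; exact zero_mem_locSetD
  · intro x y _ _ hx hy
    rw [mul_add]; exact add_mem_locSetD hx hy

lemma central_mul_central {v : HeightOneSpectrum (𝓞 F)} (c c' : Kv F v)
    (X Y : Dv F a b v) :
    (algebraMap (Kv F v) (Dv F a b v) c * X) * (algebraMap (Kv F v) (Dv F a b v) c' * Y) =
      algebraMap (Kv F v) (Dv F a b v) (c * c') * (X * Y) := by
  rw [mul_assoc, ← mul_assoc X, ← Algebra.commutes c' X, mul_assoc, ← mul_assoc, ← map_mul]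

lemma mul_mem_locSetD {v : HeightOneSpectrum (𝓞 F)} {S T U : Set ℍ[F, a, b]}
    (hSTU : ∀ s ∈ S, ∀ t ∈ T, s * t ∈ U) {w w' : Dv F a b v}
    (hw : w ∈ locSetD F a b v S) (hw' : w' ∈ locSetD F a b v T) :
    w * w' ∈ locSetD F a b v U := by
  refine AddSubmonoid.closure_induction ?_ ?_ ?_ hw
  · rintro g ⟨c, hc, s, hs, rfl⟩
    refine AddSubmonoid.closure_induction ?_ ?_ ?_ hw'
    · rintro g' ⟨c', hc', t, ht, rfl⟩
      rw [central_mul_central, ← embDv_mul']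
      exact mem_locSetD_gen (mul_mem hc hc') (hSTU s hs t ht)
    · rw [mul_zero]; exact zero_mem_locSetD
    · intro x y _ _ hx hy
      rw [mul_add]; exact add_mem_locSetD hx hy
  · rw [zero_mul]; exact zero_mem_locSetD
  · intro x y _ _ hx hy
    rw [add_mul]; exact add_mem_locSetD hx hy

end PrimAux

set_option maxHeartbeats 2000000
set_option synthInstance.maxHeartbeats 1000000

/-- **Lemma.** Let `K` be a maximal subfield of the quaternion algebra `D` over the number
field `F`, `𝒪` a full `O_F`-order in `D`, `B = K ∩ 𝒪`, and `𝔟` a locally principal integral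
ideal of `B`.  Then `𝔟` is a primitive `B`-ideal iff `𝔟𝒪` is a primitive right `𝒪`-ideal. -/
theorem primitive_ideal_transfer
    (F : Type*) [Field F] [NumberField F]
    (a b : F) (ha : a ≠ 0) (hb : b ≠ 0)
    (K : Subring ℍ[F, a, b]) (hK : IsMaxSubfield F a b K)
    (O : Subring ℍ[F, a, b]) (hord : IsOrder (F := F) O)
    (𝔟 : Set ℍ[F, a, b]) (h1 : IsIntegralBIdeal F a b K O 𝔟)
    (h2 : IsLocPrincipalBIdeal F a b K O 𝔟) :
    IsPrimitiveBIdeal F a b K O 𝔟 ↔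
      IsPrimitiveRightOIdeal F a b O (setMulD F a b 𝔟 (O : Set ℍ[F, a, b])) := by
  set J := setMulD F a b 𝔟 (O : Set ℍ[F, a, b]) with hJdef
  have hBO : ((K ⊓ O : Subring ℍ[F, a, b]) : Set ℍ[F, a, b]) ⊆ (O : Set ℍ[F, a, b]) :=
    fun x hx => (Subring.mem_inf.mp hx).2
  -- generators of `J`
  have hgenJ : ∀ x ∈ 𝔟, ∀ y ∈ (O : Set ℍ[F, a, b]), x * y ∈ J :=
    fun x hx y hy => AddSubmonoid.subset_closure ⟨x, hx, y, hy, rfl⟩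
  -- `J ⊆ O`
  have hJO : J ⊆ (O : Set ℍ[F, a, b]) := by
    intro z hz
    refine AddSubmonoid.closure_induction ?_ ?_ ?_ hz
    · rintro w ⟨x, hx, y, hy, rfl⟩
      exact mul_mem (hBO (h1.1 hx)) hy
    · exact zero_mem O
    · intro x y _ _ hx hy
      exact add_mem hx hy
  -- `𝔟 ⊆ J`
  have hbJ : 𝔟 ⊆ J := by
    intro x hx
    have h := hgenJ x hx 1 (one_mem O)
    rwa [mul_one] at h
  -- `J` is locally principal, with the same local generators as `𝔟`
  have hlocJ : ∀ v : HeightOneSpectrum (𝓞 F), ∃ u : (Dv F a b v)ˣ,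
      locSetD F a b v J =
        (fun w => (u : Dv F a b v) * w) '' locSetD F a b v (O : Set ℍ[F, a, b]) := by
    intro v
    obtain ⟨u, -, heq⟩ := h2 v
    have hmono : locSetD F a b v ((K ⊓ O : Subring ℍ[F, a, b]) : Set ℍ[F, a, b]) ⊆
        locSetD F a b v (O : Set ℍ[F, a, b]) := locSetD_mono hBO
    have h1mem : (1 : Dv F a b v) ∈
        locSetD F a b v ((K ⊓ O : Subring ℍ[F, a, b]) : Set ℍ[F, a, b]) := by
      have h := embDv_mem_locSetD (v := v)
        (S := ((K ⊓ O : Subring ℍ[F, a, b]) : Set ℍ[F, a, b])) (one_mem (K ⊓ O))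
      rwa [embDv_one'] at h
    have hub : (u : Dv F a b v) ∈ locSetD F a b v 𝔟 := by
      rw [heq]
      exact ⟨1, h1mem, mul_one _⟩
    refine ⟨u, Set.Subset.antisymm ?_ ?_⟩
    · intro z hz
      refine AddSubmonoid.closure_induction ?_ ?_ ?_ hz
      · rintro w ⟨c, hc, s, hs, rfl⟩
        have hes : embDv F a b v s ∈
            (fun w => (u : Dv F a b v) * w) '' locSetD F a b v (O : Set ℍ[F, a, b]) := by
          refine AddSubmonoid.closure_induction ?_ ?_ ?_ hs
          · rintro w' ⟨x, hx, y, hy, rfl⟩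
            have hex : embDv F a b v x ∈ locSetD F a b v 𝔟 := embDv_mem_locSetD hx
            rw [heq] at hex
            obtain ⟨w₀, hw₀, hw₀e⟩ := hex
            have hw₀e' : (u : Dv F a b v) * w₀ = embDv F a b v x := hw₀e
            refine ⟨w₀ * embDv F a b v y,
              mul_mem_locSetD (fun s hs t ht => mul_mem hs ht) (hmono hw₀)
                (embDv_mem_locSetD hy), ?_⟩
            show (u : Dv F a b v) * (w₀ * embDv F a b v y) = embDv F a b v (x * y)
            rw [embDv_mul', ← hw₀e', mul_assoc]
          · refine ⟨0, zero_mem_locSetD, ?_⟩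
            show (u : Dv F a b v) * 0 = embDv F a b v 0
            rw [embDv_zero', mul_zero]
          · rintro s1 s2 _ _ ⟨w1, hw1, e1⟩ ⟨w2, hw2, e2⟩
            have e1' : (u : Dv F a b v) * w1 = embDv F a b v s1 := e1
            have e2' : (u : Dv F a b v) * w2 = embDv F a b v s2 := e2
            exact ⟨w1 + w2, add_mem_locSetD hw1 hw2,
              by show (u : Dv F a b v) * (w1 + w2) = _
                 rw [mul_add, e1', e2', embDv_add']⟩
        obtain ⟨w₀, hw₀, hw₀e⟩ := hes
        have hw₀e' : (u : Dv F a b v) * w₀ = embDv F a b v s := hw₀e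
        refine ⟨algebraMap (Kv F v) (Dv F a b v) c * w₀, smul_mem_locSetD hc hw₀, ?_⟩
        show (u : Dv F a b v) * (algebraMap (Kv F v) (Dv F a b v) c * w₀) = _
        rw [← mul_assoc, ← Algebra.commutes c (u : Dv F a b v), mul_assoc, hw₀e']
      · refine ⟨0, zero_mem_locSetD, ?_⟩
        show (u : Dv F a b v) * 0 = 0
        exact mul_zero _
      · rintro z1 z2 _ _ ⟨w1, hw1, e1⟩ ⟨w2, hw2, e2⟩
        have e1' : (u : Dv F a b v) * w1 = z1 := e1
        have e2' : (u : Dv F a b v) * w2 = z2 := e2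
        exact ⟨w1 + w2, add_mem_locSetD hw1 hw2,
          by show (u : Dv F a b v) * (w1 + w2) = z1 + z2
             rw [mul_add, e1', e2']⟩
    · rintro z ⟨w, hw, rfl⟩
      exact mul_mem_locSetD hgenJ hub hw
  -- if `𝔟 ⊆ 𝔭B` then `J ⊆ 𝔭O`
  have hforward : ∀ v : HeightOneSpectrum (𝓞 F),
      𝔟 ⊆ iScale F v.asIdeal ((K ⊓ O : Subring ℍ[F, a, b]) : Set ℍ[F, a, b]) →
      J ⊆ iScale F v.asIdeal (O : Set ℍ[F, a, b]) := by
    intro v hbsub z hz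
    refine AddSubmonoid.closure_induction ?_ ?_ ?_ hz
    · rintro w ⟨x, hx, y, hy, rfl⟩
      have hx' := hbsub hx
      refine AddSubmonoid.closure_induction ?_ ?_ ?_ hx'
      · rintro w' ⟨c, hc, s, hs, rfl⟩
        rw [mul_assoc]
        exact mem_iScale_gen hc (mul_mem (hBO hs) hy)
      · rw [zero_mul]; exact zero_mem_iScale
      · intro x1 x2 _ _ hx1 hx2
        rw [add_mul]; exact add_mem_iScale hx1 hx2
    · exact zero_mem_iScale
    · intro x y _ _ hx hy
      exact add_mem_iScale hx hy
  -- if `J ⊆ 𝔭O` then `𝔟 ⊆ 𝔭B`  (the crux)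
  have hback : ∀ v : HeightOneSpectrum (𝓞 F),
      J ⊆ iScale F v.asIdeal (O : Set ℍ[F, a, b]) →
      𝔟 ⊆ iScale F v.asIdeal ((K ⊓ O : Subring ℍ[F, a, b]) : Set ℍ[F, a, b]) := by
    intro v hJsub x hx
    have hxKO : x ∈ K ⊓ O := h1.1 hx
    have hxI : x ∈ iScale F v.asIdeal (O : Set ℍ[F, a, b]) := hJsub (hbJ hx)
    obtain ⟨π, p, q, hπ0, hπ, hp, hpq, hdiv⟩ := exists_uniformizer_pair v
    have hA : ∃ y ∈ O, algebraMap F ℍ[F, a, b] ((q : 𝓞 F) : F) * x =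
        algebraMap F ℍ[F, a, b] ((π : 𝓞 F) : F) * y := by
      refine AddSubmonoid.closure_induction ?_ ?_ ?_ hxI
      · rintro w ⟨c, hc, s, hs, rfl⟩
        obtain ⟨d, hd⟩ := hdiv c hc
        refine ⟨algebraMap F ℍ[F, a, b] ((d : 𝓞 F) : F) * s,
          mul_mem (hord.scalars d) hs, ?_⟩
        have hcast : ((q : 𝓞 F) : F) * ((c : 𝓞 F) : F) = ((π : 𝓞 F) : F) * ((d : 𝓞 F) : F) := by
          exact_mod_cast congrArg (fun z : 𝓞 F => (z : F)) hd
        rw [← mul_assoc, ← mul_assoc]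
        congr 1
        rw [← map_mul, hcast, map_mul]
      · exact ⟨0, zero_mem O, by rw [mul_zero, mul_zero]⟩
      · rintro x1 x2 _ _ ⟨y1, hy1, e1⟩ ⟨y2, hy2, e2⟩
        exact ⟨y1 + y2, add_mem hy1 hy2, by rw [mul_add, e1, e2, mul_add]⟩
    obtain ⟨y, hyO, hy⟩ := hA
    have hyK : y ∈ K := by
      have hπF : ((π : 𝓞 F) : F) ≠ 0 := by exact_mod_cast hπ0
      have hyeq : y = algebraMap F ℍ[F, a, b] (((π : 𝓞 F) : F))⁻¹ *
          (algebraMap F ℍ[F, a, b] ((q : 𝓞 F) : F) * x) := by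
        rw [hy, ← mul_assoc, ← map_mul, inv_mul_cancel₀ hπF, map_one, one_mul]
      rw [hyeq]
      exact mul_mem (hK.1.1 _) (mul_mem (hK.1.1 _) (Subring.mem_inf.mp hxKO).1)
    have hsplit : x = algebraMap F ℍ[F, a, b] ((p : 𝓞 F) : F) * x +
        algebraMap F ℍ[F, a, b] ((q : 𝓞 F) : F) * x := by
      rw [← add_mul, ← map_add]
      have hcast : ((p : 𝓞 F) : F) + ((q : 𝓞 F) : F) = 1 := by
        exact_mod_cast congrArg (fun z : 𝓞 F => (z : F)) hpq
      rw [hcast, map_one, one_mul]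
    rw [hsplit]
    refine add_mem_iScale (mem_iScale_gen hp hxKO) ?_
    rw [hy]
    exact mem_iScale_gen hπ (Subring.mem_inf.mpr ⟨hyK, hyO⟩)
  constructor
  · rintro ⟨-, -, hprim⟩
    exact ⟨hJO, hlocJ, fun v hsub => hprim v (hback v hsub)⟩
  · rintro ⟨-, -, hprimJ⟩
    exact ⟨h1, h2, fun v hbsub => hprimJ v (hforward v hbsub)⟩

end QPaper
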